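/- Let m ≥ 3 be an odd integer. For all i, k ∈ {1,…,m}, the identity z_{ik}²·P_i = Σ_{j≠i} z_{ij}·D_k(P_j) holds in R = 𝔽₂[z_e : e ∈ E]. (This is the commutativity of the middle square of the chain map from the Frobenius twist of the Pfaffian resolution to the Pfaffian resolution.) -/

import Mathlib

open scoped Classical

noncomputable section

/-- The edges of the complete graph `K_m`: 2-element subsets of `Fin m`. -/
abbrev Edge (m : ℕ) := {e : Sym2 (Fin m) // ¬ e.IsDiag}

/-- The polynomial ring `𝔽₂[z_e : e ∈ E]`. -/
abbrev R2 (m : ℕ) := MvPolynomial (Edge m) (ZMod 2)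

/-- The variable `z_{ij}`, with the convention `z_{ii} = 0`. -/
def Zv (m : ℕ) (i j : Fin m) : R2 m :=
  if h : i = j then 0
  else MvPolynomial.X ⟨s(i, j), by simp only [Sym2.mk_isDiag_iff]; exact h⟩

/-- `M` is a perfect matching of the vertex set `T`. -/
def IsPM (m : ℕ) (T : Finset (Fin m)) (M : Finset (Edge m)) : Prop :=
  (∀ v : Fin m, v ∈ T ↔ ∃ e ∈ M, v ∈ e.val) ∧
  (∀ e ∈ M, ∀ f ∈ M, ∀ v : Fin m, v ∈ e.val → v ∈ f.val → e = f)

/-- The sum, over all perfect matchings `M` of `T`, of the monomial `∏_{e ∈ M} z_e`. -/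
def matchSum (m : ℕ) (T : Finset (Fin m)) : R2 m :=
  ∑ M ∈ Finset.univ.filter (IsPM m T), ∏ e ∈ M, MvPolynomial.X e

/-- The (characteristic 2) Pfaffian `P_i`. -/
def P (m : ℕ) (i : Fin m) : R2 m := matchSum m (Finset.univ.erase i)

/-- `H₀ = Σ_{i<j} z_{ij} P_i P_j`. -/
def H0 (m : ℕ) : R2 m :=
  ∑ p ∈ Finset.univ.filter (fun p : Fin m × Fin m => p.1 < p.2),
    Zv m p.1 p.2 * P m p.1 * P m p.2

theorem Zv_symm (m : ℕ) (i j : Fin m) : Zv m i j = Zv m j i := by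
  unfold Zv
  rcases eq_or_ne i j with h | h
  · subst h; rfl
  · rw [dif_neg h, dif_neg (Ne.symm h)]
    congr 1
    exact Subtype.ext (Sym2.eq_swap)

/-- The differential operator `D_k = Σ_{{u,v} ∈ E, k ∉ {u,v}} z_{uk} z_{kv} ∂/∂z_{uv}`. -/
def D (m : ℕ) (k : Fin m) (f : R2 m) : R2 m :=
  ∑ e ∈ Finset.univ.filter (fun e : Edge m => k ∉ e.val),
    Sym2.lift ⟨fun u v => Zv m u k * Zv m k v,
      fun u v => by simp only []; rw [Zv_symm m u k, Zv_symm m k v, mul_comm]⟩ e.val *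
    MvPolynomial.pderiv e f

/-- `C` is the edge set of a cycle of length `n` in `K_m`. -/
def IsCycleEdges (m n : ℕ) (C : Finset (Edge m)) : Prop :=
  3 ≤ n ∧ ∃ f : ℕ → Fin m,
    (∀ s t, s < n → t < n → f s = f t → s = t) ∧
    (∀ e : Edge m, e ∈ C ↔ ∃ t < n, e.val = s(f t, f ((t + 1) % n)))

/-- The set of vertices covered by a set of edges. -/
def vertsOf (m : ℕ) (S : Finset (Edge m)) : Finset (Fin m) :=
  Finset.univ.filter (fun v => ∃ e ∈ S, v ∈ e.val)

/-- The degree of the multigraph with edge multiplicities `w` at the vertex `v`. -/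
def degw (m : ℕ) (w : Edge m → ℕ) (v : Fin m) : ℕ :=
  ∑ e : Edge m, if v ∈ e.val then w e else 0

/-- `w` is `2`-regular and the connected components of the multigraph with edge
multiplicities `w` are a single odd cycle together with a collection of doubled edges. -/
def memOC (m : ℕ) (w : Edge m → ℕ) : Prop :=
  (∀ v : Fin m, degw m w v = 2) ∧
  ∃ (n : ℕ) (C M : Finset (Edge m)), Odd n ∧ IsCycleEdges m n C ∧
    IsPM m (Finset.univ \ vertsOf m C) M ∧
    ∀ e : Edge m, w e = if e ∈ C then 1 else if e ∈ M then 2 else 0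

/-!
Over `𝔽₂` the vector `(P_j)` is killed by the matrix `(z_{ij})`: `∑_j z_{ij} P_j = 0`, because
re-matching `i` is a fixed-point-free involution on the nonzero terms that preserves each
monomial. Applying the derivation `D_k`, with `D_k z_{ij} = z_{ik} z_{kj}`, gives
`∑_j z_{ij} D_k P_j = z_{ik} ∑_{j ≠ i} z_{kj} P_j`, and row `k` of the same relation turns the
right-hand side into `z_{ik} z_{ki} P_i`.
-/

open Finset MvPolynomial

theorem MvPolynomial.coe_sum_smul_pderiv {σ R : Type*} [CommSemiring R] (s : Finset σ)
    (c : σ → MvPolynomial σ R) :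
    ⇑(∑ e ∈ s, c e • pderiv e) = fun f => ∑ e ∈ s, c e * pderiv e f := by
  ext f : 1
  simp only [← Derivation.coeFnAddMonoidHom_apply, map_sum, Finset.sum_apply]
  rfl

theorem Derivation.sum_mul_apply_eq_of_sum_mul_eq_zero {R A ι : Type*} [CommSemiring R]
    [CommRing A] [Algebra R A] [CharP A 2] (δ : Derivation R A A) {s : Finset ι} {a b : ι → A}
    (h : ∑ j ∈ s, a j * b j = 0) : ∑ j ∈ s, a j * δ (b j) = ∑ j ∈ s, δ (a j) * b j := by
  have := congrArg δ h
  simp only [map_sum, Derivation.leibniz, smul_eq_mul, sum_add_distrib, δ.map_zero] at this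
  rw [CharTwo.add_eq_zero.1 this]
  simp only [mul_comm]

section

variable {m : ℕ} {T : Finset (Fin m)} {M : Finset (Edge m)}

def mkEdge {i j : Fin m} (h : i ≠ j) : Edge m := ⟨s(i, j), Sym2.mk_isDiag_iff.not.mpr h⟩

theorem mem_mkEdge {i j v : Fin m} (h : i ≠ j) : v ∈ (mkEdge h).val ↔ v = i ∨ v = j :=
  Sym2.mem_iff

theorem mkEdge_inj {i j j' : Fin m} (h : i ≠ j) (h' : i ≠ j') :
    mkEdge h = mkEdge h' ↔ j = j' :=
  Subtype.ext_iff.trans Sym2.congr_right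

theorem Zv_self (i : Fin m) : Zv m i i = 0 := dif_pos rfl

theorem Zv_of_ne {i j : Fin m} (h : i ≠ j) : Zv m i j = X (mkEdge h) := dif_neg h

theorem IsPM.mem_of_mem_edge (hM : IsPM m T M) {e : Edge m} (he : e ∈ M) {v : Fin m}
    (hv : v ∈ e.val) : v ∈ T :=
  (hM.1 v).2 ⟨e, he, hv⟩

theorem IsPM.existsUnique_edge (hM : IsPM m T M) {v : Fin m} (hv : v ∈ T) :
    ∃! e, e ∈ M ∧ v ∈ e.val := by
  obtain ⟨e, he, hve⟩ := (hM.1 v).1 hv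
  exact ⟨e, ⟨he, hve⟩, fun f hf => hM.2 f hf.1 e he v hf.2 hve⟩

theorem IsPM.exchange (hM : IsPM m T M) {i j y : Fin m} {e₀ e : Edge m} (he₀ : e₀ ∈ M)
    (he₀v : ∀ v, v ∈ e₀.val ↔ v = i ∨ v = y) (hev : ∀ v, v ∈ e.val ↔ v = i ∨ v = j)
    (hj : j ∉ T) (hiy : i ≠ y) :
    IsPM m (insert j (T.erase y)) (insert e (M.erase e₀)) := by
  obtain ⟨hcover, hdisj⟩ := hM
  constructor
  · intro v
    simp only [mem_insert, mem_erase, exists_eq_or_imp]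
    grind
  · simp only [mem_insert, mem_erase]
    rintro a (rfl | ⟨ha₀, ha⟩) b (rfl | ⟨hb₀, hb⟩) v hva hvb
    all_goals grind

/-- A pair `⟨j, M⟩` stands for the term `z_{ij} ∏_{e ∈ M} z_e` of `∑_j z_{ij} P_j`. If `M` matches
`i` to `y`, trading the edge `{i, y}` for `{i, j}` gives the pair `⟨y, M'⟩` with the same
monomial; the pairs with `j = i`, whose terms vanish, are left fixed. -/
def rematch (i : Fin m) (a : Σ _ : Fin m, Finset (Edge m)) : Σ _ : Fin m, Finset (Edge m) :=
  if h : i ≠ a.1 ∧ ∃! e, e ∈ a.2 ∧ i ∈ e.val then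
    ⟨Sym2.Mem.other (a.2.choose_property _ h.2),
      insert (mkEdge h.1) (a.2.erase (a.2.choose _ h.2))⟩
  else a

theorem rematch_of_eq {i : Fin m} {a : Σ _ : Fin m, Finset (Edge m)} (h : i = a.1) :
    rematch i a = a :=
  dif_neg fun h' => h'.1 h

theorem rematch_eq {i j : Fin m} (hi : i ∈ T)
    (hij : i ≠ j) (hM : IsPM m (T.erase j) M) :
    ∃ y, ∃ hiy : i ≠ y, mkEdge hiy ∈ M ∧
      rematch i ⟨j, M⟩ = ⟨y, insert (mkEdge hij) (M.erase (mkEdge hiy))⟩ := by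
  have hu := hM.existsUnique_edge (mem_erase.2 ⟨hij, hi⟩)
  have hmem := M.choose_property _ hu
  have hiy : i ≠ Sym2.Mem.other hmem := fun h => Sym2.other_ne (M.choose _ hu).2 hmem h.symm
  have he : mkEdge hiy = M.choose _ hu := Subtype.ext (Sym2.other_spec hmem)
  refine ⟨_, hiy, he.symm ▸ M.choose_mem _ hu, ?_⟩
  rw [rematch, dif_pos ⟨hij, hu⟩, he]

theorem rematch_spec {i j : Fin m} (hi : i ∈ T)
    (hj : j ∈ T) (hij : i ≠ j) (hM : IsPM m (T.erase j) M) :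
    ∃ y, ∃ hiy : i ≠ y, y ∈ T.erase j ∧ mkEdge hiy ∈ M ∧ mkEdge hij ∉ M ∧
      IsPM m (T.erase y) (insert (mkEdge hij) (M.erase (mkEdge hiy))) ∧
      rematch i ⟨j, M⟩ = ⟨y, insert (mkEdge hij) (M.erase (mkEdge hiy))⟩ := by
  obtain ⟨y, hiy, hyM, hrem⟩ := rematch_eq hi hij hM
  have hy : y ∈ T.erase j := hM.mem_of_mem_edge hyM ((mem_mkEdge hiy).2 (.inr rfl))
  have hjM : mkEdge hij ∉ M := fun h =>
    (mem_erase.1 (hM.mem_of_mem_edge h ((mem_mkEdge hij).2 (.inr rfl)))).1 rfl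
  have hM' := hM.exchange hyM (fun _ => mem_mkEdge hiy) (fun _ => mem_mkEdge hij)
    (fun h => (mem_erase.1 h).1 rfl) hiy
  rw [erase_right_comm, insert_erase (mem_erase.2 ⟨(ne_of_mem_erase hy).symm, hj⟩)] at hM'
  exact ⟨y, hiy, hy, hyM, hjM, hM', hrem⟩

theorem sum_Zv_mul_matchSum_erase {i : Fin m} (hi : i ∈ T) :
    ∑ j ∈ T, Zv m i j * matchSum m (T.erase j) = 0 := by
  simp only [matchSum, mul_sum]
  rw [sum_sigma']
  refine sum_involution (fun a _ => rematch i a) ?_ ?_ ?_ ?_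
  all_goals
    rintro ⟨j, M⟩ ha
    obtain ⟨hj, hM⟩ : j ∈ T ∧ IsPM m (T.erase j) M := by simpa using ha
    obtain rfl | hij := eq_or_ne i j
    · simp [rematch_of_eq, Zv_self, ha]
    obtain ⟨y, hiy, hy, hyM, hjM, hM', hrem⟩ := rematch_spec hi hj hij hM
    simp only [hrem]
  · rw [prod_insert (fun h => hjM (mem_of_mem_erase h)), ← mul_prod_erase M _ hyM,
      Zv_of_ne hij, Zv_of_ne hiy, mul_left_comm, CharTwo.add_self_eq_zero]
  · simp [ne_of_mem_erase hy]
  · simpa using ⟨mem_of_mem_erase hy, hM'⟩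
  · obtain ⟨j', hij', -, hj'M, -, -, hrem'⟩ := rematch_spec hi (mem_of_mem_erase hy) hiy hM'
    obtain rfl : j' = j := (mkEdge_inj hij' hij).1 <| hM'.2 _ hj'M _ (mem_insert_self _ _) i
      ((mem_mkEdge _).2 (.inl rfl)) ((mem_mkEdge _).2 (.inl rfl))
    rw [hrem', erase_insert (fun h => hjM (mem_of_mem_erase h)), insert_erase hyM]

theorem sum_Zv_mul_P (i : Fin m) : ∑ j, Zv m i j * P m j = 0 :=
  sum_Zv_mul_matchSum_erase (mem_univ i)

theorem exists_derivation_coe_eq_D (k : Fin m) :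
    ∃ δ : Derivation (ZMod 2) (R2 m) (R2 m), ⇑δ = D m k :=
  ⟨_, MvPolynomial.coe_sum_smul_pderiv _ _⟩

theorem D_Zv (k : Fin m) {i j : Fin m} (hij : i ≠ j) :
    D m k (Zv m i j) = Zv m i k * Zv m k j := by
  rw [Zv_of_ne hij, D]
  by_cases hk : k ∈ (mkEdge hij).val
  · rw [sum_eq_zero fun e he => ?_]
    · rcases (mem_mkEdge hij).1 hk with rfl | rfl <;> simp [Zv_self]
    · rw [pderiv_X_of_ne (by rintro rfl; exact (mem_filter.1 he).2 hk), mul_zero]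
  · rw [sum_eq_single (mkEdge hij) (fun e _ hne => by rw [pderiv_X_of_ne hne.symm, mul_zero])
      (fun h => (h (mem_filter.2 ⟨mem_univ _, hk⟩)).elim), pderiv_X_self, mul_one]
    rfl

end

theorem middle_square_general (m : ℕ) (i k : Fin m) :
    Zv m i k ^ 2 * P m i = ∑ j ∈ Finset.univ.erase i, Zv m i j * D m k (P m j) := by
  obtain ⟨δ, hδ⟩ := exists_derivation_coe_eq_D k
  have hrow : ∑ j ∈ univ.erase i, Zv m k j * P m j = Zv m k i * P m i := by
    rw [sum_erase_eq_sub (mem_univ i), sum_Zv_mul_P k, zero_sub, CharTwo.neg_eq]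
  calc Zv m i k ^ 2 * P m i = Zv m i k * ∑ j ∈ univ.erase i, Zv m k j * P m j := by
        rw [hrow, Zv_symm m k i]; ring
    _ = ∑ j ∈ univ.erase i, D m k (Zv m i j) * P m j := by
        rw [mul_sum]
        refine sum_congr rfl fun j hj => ?_
        rw [D_Zv k (ne_of_mem_erase hj).symm]; ring
    _ = ∑ j, D m k (Zv m i j) * P m j :=
        sum_erase _ (by rw [Zv_self, ← hδ, δ.map_zero, zero_mul])
    _ = ∑ j, Zv m i j * D m k (P m j) :=
        (hδ ▸ δ.sum_mul_apply_eq_of_sum_mul_eq_zero (sum_Zv_mul_P i)).symm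
    _ = ∑ j ∈ univ.erase i, Zv m i j * D m k (P m j) :=
        (sum_erase _ (by rw [Zv_self, zero_mul])).symm

/-- For all `i, k`, `z_{ik}²·P_i = Σ_{j ≠ i} z_{ij}·D_k(P_j)`. -/
theorem middle_square (m : ℕ) (hm : 3 ≤ m) (hmodd : Odd m) (i k : Fin m) :
    Zv m i k ^ 2 * P m i = ∑ j ∈ Finset.univ.erase i, Zv m i j * D m k (P m j) :=
  middle_square_general m i k

end
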